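/- arXiv:1801.09435 — 2 statements merged into one kernel-verified Lean document; each statement's English description precedes it below -/
import Mathlib

section
/- Let Ω ⊂ ℝ³ be a bounded open set, K : [0,∞) → [0,∞) continuous and bounded, β > 0, C₁, C₂ > 0, and k, l ∈ {1,2,3}. Let (ε_m) be positive reals with ε_m → 0. For each m, let x¹,…,x^{N_m} be distinct points of the closure of Ω, let V^i = {x ∈ Ω : |x − x^i| < |x − x^j| for all j ≠ i} be the Voronoi cell of x^i in Ω, and assume diam V^i ≤ C₁ε_m and vol(V^i) ≥ C₂ε_m³ for all i. Let A^{ij} ∈ {0,1} for all i, j. Define φ_m(x,y) = ε_m⁶ Σ_{i,j : |x^i−x^j| ≥ βε_m} A^{ij} vol(V^i)⁻¹ vol(V^j)⁻¹ 1_{V^i}(x) 1_{V^j}(y) and G_m(x,y) = ε_m⁶ Σ_{i,j : |x^i−x^j| ≥ βε_m} K(|x^i−x^j|) (x^i_k−x^j_k)(x^i_l−x^j_l) |x^i−x^j|⁻² A^{ij} vol(V^i)⁻¹ vol(V^j)⁻¹ 1_{V^i}(x) 1_{V^j}(y). Assume sup_m ‖φ_m‖_{L∞(Ω×Ω)} <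 ∞ and that φ_m converges weak-* in L∞(Ω×Ω) to some φ ∈ L∞(Ω×Ω). Then G_m converges weak-* in L∞(Ω×Ω) to G(x,y) = K(|x−y|) φ(x,y) (x_k−y_k)(x_l−y_l) |x−y|⁻². -/
/-!
On the cell pair `Vⁱ × Vʲ` the kernel `G_m` equals `f(xⁱ, xʲ) φ_m`, where
`f(a, b) = K(|a - b|) (a_k - b_k) (a_l - b_l) / |a - b|²`, and since a site lies in the closure
of its Voronoi cell, `(xⁱ, xʲ)` is within `C₁ ε_m` of every point of `Vⁱ × Vʲ`. Hence
`G_m = f φ_m + E_m` with `E_m` uniformly bounded and tending to `0` at every point off the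
diagonal, where `f` is continuous, i.e. almost everywhere. Dominated convergence makes `E_m`
weak-* null, and `f φ_m → f φ` weak-* because `f h` is integrable whenever `h` is.
-/

open MeasureTheory Filter Topology Set Function

def WeakStarTendsto {α : Type*} [MeasurableSpace α] (μ : Measure α) (F : ℕ → α → ℝ)
    (Φ : α → ℝ) : Prop :=
  ∀ h : α → ℝ, Integrable h μ →
    Tendsto (fun m => ∫ p, F m p * h p ∂μ) atTop (𝓝 (∫ p, Φ p * h p ∂μ))

namespace WeakStarTendsto

variable {α : Type*} [MeasurableSpace α] {μ : Measure α} {F E : ℕ → α → ℝ} {Φ f : α → ℝ}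

theorem mul_left (hF : WeakStarTendsto μ F Φ) {C : ℝ} (hf : AEStronglyMeasurable f μ)
    (hfC : ∀ᵐ p ∂μ, ‖f p‖ ≤ C) :
    WeakStarTendsto μ (fun m p => f p * F m p) (fun p => f p * Φ p) := by
  intro h hh
  simpa only [mul_assoc, mul_left_comm (f _)] using hF _ (hh.bdd_mul hf hfC)

theorem of_ae_tendsto_zero {D : ℝ} (hE : ∀ m, AEStronglyMeasurable (E m) μ)
    (hED : ∀ m, ∀ᵐ p ∂μ, ‖E m p‖ ≤ D)
    (hE0 : ∀ᵐ p ∂μ, Tendsto (fun m => E m p) atTop (𝓝 0)) :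
    WeakStarTendsto μ E 0 := by
  intro h hh
  have hbound : ∀ m, ∀ᵐ p ∂μ, ‖E m p * h p‖ ≤ D * ‖h p‖ := fun m => by
    filter_upwards [hED m] with p hp
    rw [norm_mul]
    exact mul_le_mul_of_nonneg_right hp (norm_nonneg _)
  have hlim : ∀ᵐ p ∂μ, Tendsto (fun m => E m p * h p) atTop (𝓝 0) := by
    filter_upwards [hE0] with p hp
    simpa using hp.mul_const (h p)
  simpa using tendsto_integral_of_dominated_convergence _ (fun m => (hE m).mul hh.1)
    (hh.norm.const_mul D) hbound hlim

theorem add_zero (hF : WeakStarTendsto μ F Φ) (hE : WeakStarTendsto μ E 0)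
    (hF_top : ∀ m, MemLp (F m) ⊤ μ) (hE_top : ∀ m, MemLp (E m) ⊤ μ) :
    WeakStarTendsto μ (fun m p => F m p + E m p) Φ := by
  intro h hh
  have hsum := (hF h hh).add (hE h hh)
  simp only [Pi.zero_apply, zero_mul, integral_zero, _root_.add_zero] at hsum
  refine hsum.congr fun m => ?_
  simp_rw [add_mul]
  exact (integral_add (hh.mul_of_top_right (hF_top m)) (hh.mul_of_top_right (hE_top m))).symm

theorem mul_of_dist_le [PseudoMetricSpace α] {φ G : ℕ → α → ℝ} {r : ℕ → ℝ} {C Cf : ℝ}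
    (hφ : WeakStarTendsto μ φ Φ) (hφ_meas : ∀ m, AEStronglyMeasurable (φ m) μ)
    (hφ_bdd : ∀ m, ∀ᵐ p ∂μ, ‖φ m p‖ ≤ C)
    (hf_meas : AEStronglyMeasurable f μ) (hf_bdd : ∀ p, ‖f p‖ ≤ Cf)
    (hf_cont : ∀ᵐ p ∂μ, ContinuousAt f p) (hG_meas : ∀ m, AEStronglyMeasurable (G m) μ)
    (hr : Tendsto r atTop (𝓝 0)) (hG : ∀ m p, ∃ q, dist q p ≤ r m ∧ G m p = f q * φ m p) :
    WeakStarTendsto μ G (fun p => f p * Φ p) := by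
  choose q hq_dist hq_eq using hG
  have hfφ_bdd : ∀ m, ∀ᵐ p ∂μ, ‖f p * φ m p‖ ≤ Cf * C := fun m => by
    filter_upwards [hφ_bdd m] with p hp
    rw [norm_mul]
    exact mul_le_mul (hf_bdd p) hp (norm_nonneg _) ((norm_nonneg _).trans (hf_bdd p))
  have hE_bdd : ∀ m, ∀ᵐ p ∂μ, ‖G m p - f p * φ m p‖ ≤ 2 * Cf * C := fun m => by
    filter_upwards [hφ_bdd m] with p hp
    rw [hq_eq, ← sub_mul, norm_mul, two_mul]
    exact mul_le_mul ((norm_sub_le _ _).trans (add_le_add (hf_bdd _) (hf_bdd _))) hp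
      (norm_nonneg _) (by linarith [(norm_nonneg _).trans (hf_bdd p)])
  have hE_lim : ∀ᵐ p ∂μ, Tendsto (fun m => G m p - f p * φ m p) atTop (𝓝 0) := by
    filter_upwards [hf_cont, ae_all_iff.2 hφ_bdd] with p hp hφp
    have hq : Tendsto (fun m => q m p) atTop (𝓝 p) := tendsto_iff_dist_tendsto_zero.2
      (squeeze_zero (fun _ => dist_nonneg) (fun m => hq_dist m p) hr)
    have hfq : Tendsto (fun m => ‖f (q m p) - f p‖ * C) atTop (𝓝 0) := by
      simpa using (((hp.tendsto.comp hq).sub_const (f p)).norm).mul_const C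
    refine squeeze_zero_norm (fun m => ?_) hfq
    rw [hq_eq, ← sub_mul, norm_mul]
    exact mul_le_mul_of_nonneg_left (hφp m) (norm_nonneg _)
  have hfφ_meas : ∀ m, AEStronglyMeasurable (fun p => f p * φ m p) μ :=
    fun m => hf_meas.mul (hφ_meas m)
  have hE_meas : ∀ m, AEStronglyMeasurable (fun p => G m p - f p * φ m p) μ :=
    fun m => (hG_meas m).sub (hfφ_meas m)
  simpa only [add_sub_cancel] using (hφ.mul_left hf_meas (ae_of_all _ hf_bdd)).add_zero
    (of_ae_tendsto_zero hE_meas hE_bdd hE_lim)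
    (fun m => memLp_top_of_bound (hfφ_meas m) _ (hfφ_bdd m))
    (fun m => memLp_top_of_bound (hE_meas m) _ (hE_bdd m))

end WeakStarTendsto

theorem ae_norm_le_of_eLpNorm_top_le {α : Type*} [MeasurableSpace α] {μ : Measure α}
    {f : α → ℝ} {C : ℝ} (hf : eLpNorm f ⊤ μ ≤ ENNReal.ofReal C) :
    ∀ᵐ p ∂μ, ‖f p‖ ≤ max C 0 := by
  rw [eLpNorm_exponent_top] at hf
  filter_upwards [ae_le_eLpNormEssSup (f := f) (μ := μ)] with p hp
  have hp' := hp.trans hf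
  rw [← ofReal_norm, ENNReal.ofReal_le_ofReal_iff'] at hp'
  exact hp'.elim le_max_of_le_left le_max_of_le_right

theorem Measure.ae_prod_fst_ne_snd {α : Type*} [MeasurableSpace α] [MeasurableEq α]
    (μ ν : Measure α) [SFinite ν] [NullSingletonClass ν] : ∀ᵐ p ∂μ.prod ν, p.1 ≠ p.2 := by
  have hdiag : μ.prod ν (diagonal α) = 0 := by
    refine (Measure.measure_prod_null measurableSet_diagonal).2 (ae_of_all _ fun a => ?_)
    have : Prod.mk a ⁻¹' diagonal α = {a} := by
      ext b
      simp [eq_comm]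
    simp [this]
  filter_upwards [measure_eq_zero_iff_ae_notMem.1 hdiag] with p hp using hp

section Voronoi

variable {E ι : Type*} [PseudoMetricSpace E] {Ω : Set E} {x : ι → E} {i : ι} {y : E}

def voronoiCell (Ω : Set E) (x : ι → E) (i : ι) : Set E :=
  {y ∈ Ω | ∀ j, j ≠ i → dist y (x i) < dist y (x j)}

theorem pairwise_disjoint_voronoiCell (Ω : Set E) (x : ι → E) :
    Pairwise (Disjoint on voronoiCell Ω x) := fun i j hij =>
  disjoint_left.2 fun _ hi hj => (hi.2 j hij.symm).not_gt (hj.2 i hij)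

theorem isOpen_setOf_forall_dist_lt [Finite ι] (x : ι → E) (i : ι) :
    IsOpen {y | ∀ j, j ≠ i → dist y (x i) < dist y (x j)} := by
  simp only [ofPred_forall]
  exact isOpen_iInter_of_finite fun j => isOpen_iInter_of_finite fun _ =>
    isOpen_lt (by fun_prop) (by fun_prop)

theorem measurableSet_voronoiCell [Finite ι] [MeasurableSpace E] [OpensMeasurableSpace E]
    (hΩ : MeasurableSet Ω) (x : ι → E) (i : ι) : MeasurableSet (voronoiCell Ω x i) :=
  hΩ.inter (isOpen_setOf_forall_dist_lt x i).measurableSet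

/-- A nonempty cell rules out a second site at `x i`, so `x i` lies in the open region cutting
out its cell. -/
theorem mem_closure_voronoiCell [Finite ι] (hxi : x i ∈ closure Ω) (hy : y ∈ voronoiCell Ω x i) :
    x i ∈ closure (voronoiCell Ω x i) := by
  have hself : x i ∈ {z | ∀ j, j ≠ i → dist z (x i) < dist z (x j)} := fun j hj => by
    rw [dist_self]
    linarith [hy.2 j hj, dist_triangle y (x i) (x j)]
  have := (isOpen_setOf_forall_dist_lt x i).inter_closure ⟨hself, hxi⟩
  rwa [inter_comm] at this

theorem dist_le_diam_voronoiCell [Finite ι] (hΩ : Bornology.IsBounded Ω) (hxi : x i ∈ closure Ω)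
    (hy : y ∈ voronoiCell Ω x i) : dist y (x i) ≤ Metric.diam (voronoiCell Ω x i) := by
  rw [← Metric.diam_closure]
  exact Metric.dist_le_diam_of_mem (hΩ.subset (sep_subset _ _)).closure (subset_closure hy)
    (mem_closure_voronoiCell hxi hy)

end Voronoi

section CellPairSum

variable {α ι : Type*} [Fintype ι] {W : ι → Set α} {P : ι → ι → Prop} [DecidableRel P]
  {c : ι → ι → ℝ} {p : α × α}

noncomputable def cellPairSum (W : ι → Set α) (P : ι → ι → Prop) [DecidableRel P]
    (c : ι → ι → ℝ) (p : α × α) : ℝ :=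
  ∑ i, ∑ j, if P i j then
    c i j * (W i).indicator (fun _ => (1 : ℝ)) p.1 * (W j).indicator (fun _ => (1 : ℝ)) p.2
  else 0

theorem cellPairSum_eq_of_mem (hW : Pairwise (Disjoint on W)) {i j : ι} (h₁ : p.1 ∈ W i)
    (h₂ : p.2 ∈ W j) : cellPairSum W P c p = if P i j then c i j else 0 := by
  have hnot : ∀ {a b} {z : α}, z ∈ W a → b ≠ a → z ∉ W b :=
    fun ha hba hb => disjoint_left.1 (hW hba) hb ha
  rw [cellPairSum, Fintype.sum_eq_single i, Fintype.sum_eq_single j]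
  · simp [indicator_of_mem h₁, indicator_of_mem h₂]
  · intro b hb
    simp [indicator_of_notMem (hnot h₂ hb)]
  · intro a ha
    simp [indicator_of_notMem (hnot h₁ ha)]

theorem cellPairSum_eq_zero (h : ¬∃ i j, p.1 ∈ W i ∧ p.2 ∈ W j) : cellPairSum W P c p = 0 := by
  simp only [not_exists, not_and] at h
  refine Finset.sum_eq_zero fun i _ => Finset.sum_eq_zero fun j _ => ?_
  by_cases h₁ : p.1 ∈ W i
  · simp [indicator_of_notMem (h i j h₁)]
  · simp [indicator_of_notMem h₁]

theorem measurable_cellPairSum [MeasurableSpace α] (hW : ∀ i, MeasurableSet (W i)) :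
    Measurable (cellPairSum W P c) := by
  refine Finset.measurable_sum _ fun i _ => Finset.measurable_sum _ fun j _ => ?_
  split_ifs
  · exact (((measurable_const.indicator (hW i)).comp measurable_fst).const_mul _).mul
      ((measurable_const.indicator (hW j)).comp measurable_snd)
  · exact measurable_const

theorem exists_dist_le_cellPairSum_mul_eq [PseudoMetricSpace α] (hW : Pairwise (Disjoint on W))
    {x : ι → α} {r : ℝ} (hr : 0 ≤ r) (hx : ∀ i, ∀ y ∈ W i, dist y (x i) ≤ r)
    (g : α × α → ℝ) (p : α × α) :
    ∃ q, dist q p ≤ r ∧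
      cellPairSum W P (fun i j => g (x i, x j) * c i j) p = g q * cellPairSum W P c p := by
  by_cases h : ∃ i j, p.1 ∈ W i ∧ p.2 ∈ W j
  · obtain ⟨i, j, h₁, h₂⟩ := h
    refine ⟨(x i, x j), ?_, ?_⟩
    · rw [Prod.dist_eq, dist_comm, dist_comm (x j)]
      exact max_le (hx i _ h₁) (hx j _ h₂)
    · rw [cellPairSum_eq_of_mem hW h₁ h₂, cellPairSum_eq_of_mem hW h₁ h₂, mul_ite, mul_zero]
  · exact ⟨p, by rwa [dist_self], by rw [cellPairSum_eq_zero h, cellPairSum_eq_zero h, mul_zero]⟩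

end CellPairSum

section PairKernel

variable {ι : Type*} [Fintype ι] {K : ℝ → ℝ}

noncomputable def pairKernel (K : ℝ → ℝ) (k l : ι)
    (p : EuclideanSpace ℝ ι × EuclideanSpace ℝ ι) : ℝ :=
  K (dist p.1 p.2) * (p.1 k - p.2 k) * (p.1 l - p.2 l) / dist p.1 p.2 ^ 2

theorem abs_pairKernel_le {C : ℝ} (hK : ∀ r, |K r| ≤ C) (k l : ι)
    (p : EuclideanSpace ℝ ι × EuclideanSpace ℝ ι) : |pairKernel K k l p| ≤ C := by
  have hcoord : ∀ n, |p.1 n - p.2 n| ≤ dist p.1 p.2 := fun n => by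
    simpa [Real.dist_eq] using PiLp.dist_apply_le p.1 p.2 n
  have hC : 0 ≤ C := (abs_nonneg _).trans (hK 0)
  obtain hd | hd := (dist_nonneg : 0 ≤ dist p.1 p.2).eq_or_lt
  · simp [pairKernel, ← hd, hC]
  · rw [pairKernel, abs_div, abs_mul, abs_mul, abs_pow, abs_of_pos hd, div_le_iff₀ (by positivity)]
    calc |K (dist p.1 p.2)| * |p.1 k - p.2 k| * |p.1 l - p.2 l|
        ≤ C * dist p.1 p.2 * dist p.1 p.2 :=
          mul_le_mul (mul_le_mul (hK _) (hcoord k) (abs_nonneg _) hC) (hcoord l) (abs_nonneg _)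
            (mul_nonneg hC hd.le)
      _ = C * dist p.1 p.2 ^ 2 := by ring

theorem continuousAt_pairKernel (hK : Continuous K) (k l : ι)
    {p : EuclideanSpace ℝ ι × EuclideanSpace ℝ ι} (hp : p.1 ≠ p.2) :
    ContinuousAt (pairKernel K k l) p := by
  unfold pairKernel
  refine ContinuousAt.div (by fun_prop) (by fun_prop) ?_
  simpa using hp

theorem ae_continuousAt_pairKernel (hK : Continuous K) (k l : ι)
    (μ ν : Measure (EuclideanSpace ℝ ι)) [SFinite ν] [NullSingletonClass ν] :
    ∀ᵐ p ∂μ.prod ν, ContinuousAt (pairKernel K k l) p := by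
  filter_upwards [Measure.ae_prod_fst_ne_snd μ ν] with p hp
  exact continuousAt_pairKernel hK k l hp

theorem measurable_pairKernel (hK : Continuous K) (k l : ι) : Measurable (pairKernel K k l) := by
  unfold pairKernel
  have := hK.measurable
  fun_prop

end PairKernel

theorem discrete_longrange_kernels_weakStar_limit_general
    (Ω : Set (EuclideanSpace ℝ (Fin 3)))
    (hΩ_open : IsOpen Ω) (hΩ_bdd : Bornology.IsBounded Ω)
    (K : ℝ → ℝ) (hK_cont : Continuous K)
    (hK_bdd : ∃ C : ℝ, ∀ r : ℝ, |K r| ≤ C)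
    (β C₁ : ℝ) (hC₁ : 0 < C₁)
    (k l : Fin 3)
    (ε : ℕ → ℝ) (hε_pos : ∀ m, 0 < ε m) (hε_lim : Tendsto ε atTop (𝓝 0))
    (Np : ℕ → ℕ)
    (x : ∀ m : ℕ, Fin (Np m) → EuclideanSpace ℝ (Fin 3))
    (hx_mem : ∀ m i, x m i ∈ closure Ω)
    (V : ∀ m : ℕ, Fin (Np m) → Set (EuclideanSpace ℝ (Fin 3)))
    (hV : ∀ m i, V m i =
      {y ∈ Ω | ∀ j, j ≠ i → dist y (x m i) < dist y (x m j)})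
    (hV_diam : ∀ m i, Metric.diam (V m i) ≤ C₁ * ε m)
    (A : ∀ m : ℕ, Fin (Np m) → Fin (Np m) → ℝ)
    (φ : ℕ → EuclideanSpace ℝ (Fin 3) × EuclideanSpace ℝ (Fin 3) → ℝ)
    (hφ : ∀ m p, φ m p = ε m ^ 6 * ∑ i, ∑ j,
      if β * ε m ≤ dist (x m i) (x m j) then
        A m i j * ((volume (V m i)).toReal)⁻¹ * ((volume (V m j)).toReal)⁻¹ *
          Set.indicator (V m i) (fun _ => (1 : ℝ)) p.1 *
          Set.indicator (V m j) (fun _ => (1 : ℝ)) p.2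
      else 0)
    (G : ℕ → EuclideanSpace ℝ (Fin 3) × EuclideanSpace ℝ (Fin 3) → ℝ)
    (hG : ∀ m p, G m p = ε m ^ 6 * ∑ i, ∑ j,
      if β * ε m ≤ dist (x m i) (x m j) then
        K (dist (x m i) (x m j)) * (x m i k - x m j k) * (x m i l - x m j l) /
            dist (x m i) (x m j) ^ 2 *
          A m i j * ((volume (V m i)).toReal)⁻¹ * ((volume (V m j)).toReal)⁻¹ *
          Set.indicator (V m i) (fun _ => (1 : ℝ)) p.1 *
          Set.indicator (V m j) (fun _ => (1 : ℝ)) p.2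
      else 0)
    (hφ_bdd : ∃ C : ℝ, ∀ m,
      eLpNorm (φ m) ⊤ (volume.restrict (Ω ×ˢ Ω)) ≤ ENNReal.ofReal C)
    (φlim : EuclideanSpace ℝ (Fin 3) × EuclideanSpace ℝ (Fin 3) → ℝ)
    (hφ_weakstar : ∀ h : EuclideanSpace ℝ (Fin 3) × EuclideanSpace ℝ (Fin 3) → ℝ,
      Integrable h (volume.restrict (Ω ×ˢ Ω)) →
      Tendsto (fun m => ∫ p in Ω ×ˢ Ω, φ m p * h p) atTop
        (𝓝 (∫ p in Ω ×ˢ Ω, φlim p * h p))) :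
    ∀ h : EuclideanSpace ℝ (Fin 3) × EuclideanSpace ℝ (Fin 3) → ℝ,
      Integrable h (volume.restrict (Ω ×ˢ Ω)) →
      Tendsto (fun m => ∫ p in Ω ×ˢ Ω, G m p * h p) atTop
        (𝓝 (∫ p in Ω ×ˢ Ω,
          K (dist p.1 p.2) * φlim p * (p.1 k - p.2 k) * (p.1 l - p.2 l) /
            dist p.1 p.2 ^ 2 * h p)) := by
  intro h hh
  obtain ⟨CK, hCK⟩ := hK_bdd
  obtain ⟨Cφ, hCφ⟩ := hφ_bdd
  obtain rfl : V = fun m => voronoiCell Ω (x m) := funext fun m => funext (hV m)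
  set P := fun m (i j : Fin (Np m)) => β * ε m ≤ dist (x m i) (x m j)
  set c := fun m (i j : Fin (Np m)) => A m i j * (volume (voronoiCell Ω (x m) i)).toReal⁻¹ *
    (volume (voronoiCell Ω (x m) j)).toReal⁻¹
  have hφ_eq : ∀ m, φ m = fun p => ε m ^ 6 * cellPairSum (voronoiCell Ω (x m)) (P m) (c m) p :=
    fun m => funext (hφ m)
  have hG_eq : ∀ m, G m = fun p => ε m ^ 6 * cellPairSum (voronoiCell Ω (x m)) (P m)
      (fun i j => pairKernel K k l (x m i, x m j) * c m i j) p := fun m => by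
    funext p
    simp only [hG, cellPairSum, pairKernel, P, c, mul_assoc]
  have hmeas : ∀ m c', AEStronglyMeasurable (fun p => ε m ^ 6 * cellPairSum
      (voronoiCell Ω (x m)) (P m) c' p) (volume.restrict (Ω ×ˢ Ω)) := fun m _ =>
    ((measurable_cellPairSum (measurableSet_voronoiCell hΩ_open.measurableSet (x m))).const_mul
      _).aestronglyMeasurable
  have hkey : WeakStarTendsto (volume.restrict (Ω ×ˢ Ω)) G
      fun p => pairKernel K k l p * φlim p := by
    refine WeakStarTendsto.mul_of_dist_le hφ_weakstar (fun m => hφ_eq m ▸ hmeas m _)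
      (fun m => ae_norm_le_of_eLpNorm_top_le (hCφ m))
      (measurable_pairKernel hK_cont k l).aestronglyMeasurable (abs_pairKernel_le hCK k l)
      (ae_restrict_of_ae (ae_continuousAt_pairKernel hK_cont k l volume volume))
      (fun m => hG_eq m ▸ hmeas m _) (by simpa using hε_lim.const_mul C₁) fun m p => ?_
    obtain ⟨q, hq, heq⟩ := exists_dist_le_cellPairSum_mul_eq (P := P m) (c := c m)
      (pairwise_disjoint_voronoiCell Ω (x m)) (mul_nonneg hC₁.le (hε_pos m).le)
      (fun i y hy => (dist_le_diam_voronoiCell hΩ_bdd (hx_mem m i) hy).trans (hV_diam m i))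
      (pairKernel K k l) p
    exact ⟨q, hq, by rw [hG_eq, hφ_eq]; simp only [heq]; ring⟩
  convert hkey h hh using 4 with p
  simp only [pairKernel]
  ring

/-- **Lemma 3.2 of the paper.** The discrete long-range interaction kernels
`G_m(x,y) = ε_m⁶ Σ_{|xⁱ−xʲ| ≥ βε_m} K(|xⁱ−xʲ|)(xⁱ_k−xʲ_k)(xⁱ_l−xʲ_l)|xⁱ−xʲ|⁻² Aⁱʲ
  vol(Vⁱ)⁻¹ vol(Vʲ)⁻¹ 1_{Vⁱ}(x) 1_{Vʲ}(y)`
converge weak-* in `L∞(Ω×Ω)` to `G(x,y) = K(|x−y|) φ(x,y) (x_k−y_k)(x_l−y_l)|x−y|⁻²`,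
provided the pair-distribution functions `φ_m` are uniformly bounded in `L∞(Ω×Ω)` and
converge weak-* to `φ`. -/
theorem discrete_longrange_kernels_weakStar_limit
    (Ω : Set (EuclideanSpace ℝ (Fin 3)))
    (hΩ_open : IsOpen Ω) (hΩ_bdd : Bornology.IsBounded Ω)
    (K : ℝ → ℝ) (hK_cont : Continuous K)
    (hK_nonneg : ∀ r : ℝ, 0 ≤ r → 0 ≤ K r)
    (hK_bdd : ∃ C : ℝ, ∀ r : ℝ, |K r| ≤ C)
    (β C₁ C₂ : ℝ) (hβ : 0 < β) (hC₁ : 0 < C₁) (hC₂ : 0 < C₂)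
    (k l : Fin 3)
    (ε : ℕ → ℝ) (hε_pos : ∀ m, 0 < ε m) (hε_lim : Tendsto ε atTop (𝓝 0))
    (Np : ℕ → ℕ)
    (x : ∀ m : ℕ, Fin (Np m) → EuclideanSpace ℝ (Fin 3))
    (hx_inj : ∀ m, Function.Injective (x m))
    (hx_mem : ∀ m i, x m i ∈ closure Ω)
    (V : ∀ m : ℕ, Fin (Np m) → Set (EuclideanSpace ℝ (Fin 3)))
    (hV : ∀ m i, V m i =
      {y ∈ Ω | ∀ j, j ≠ i → dist y (x m i) < dist y (x m j)})
    (hV_diam : ∀ m i, Metric.diam (V m i) ≤ C₁ * ε m)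
    (hV_vol : ∀ m i, ENNReal.ofReal (C₂ * ε m ^ 3) ≤ volume (V m i))
    (A : ∀ m : ℕ, Fin (Np m) → Fin (Np m) → ℝ)
    (hA : ∀ m i j, A m i j = 0 ∨ A m i j = 1)
    (φ : ℕ → EuclideanSpace ℝ (Fin 3) × EuclideanSpace ℝ (Fin 3) → ℝ)
    (hφ : ∀ m p, φ m p = ε m ^ 6 * ∑ i, ∑ j,
      if β * ε m ≤ dist (x m i) (x m j) then
        A m i j * ((volume (V m i)).toReal)⁻¹ * ((volume (V m j)).toReal)⁻¹ *
          Set.indicator (V m i) (fun _ => (1 : ℝ)) p.1 *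
          Set.indicator (V m j) (fun _ => (1 : ℝ)) p.2
      else 0)
    (G : ℕ → EuclideanSpace ℝ (Fin 3) × EuclideanSpace ℝ (Fin 3) → ℝ)
    (hG : ∀ m p, G m p = ε m ^ 6 * ∑ i, ∑ j,
      if β * ε m ≤ dist (x m i) (x m j) then
        K (dist (x m i) (x m j)) * (x m i k - x m j k) * (x m i l - x m j l) /
            dist (x m i) (x m j) ^ 2 *
          A m i j * ((volume (V m i)).toReal)⁻¹ * ((volume (V m j)).toReal)⁻¹ *
          Set.indicator (V m i) (fun _ => (1 : ℝ)) p.1 *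
          Set.indicator (V m j) (fun _ => (1 : ℝ)) p.2
      else 0)
    (hφ_bdd : ∃ C : ℝ, ∀ m,
      eLpNorm (φ m) ⊤ (volume.restrict (Ω ×ˢ Ω)) ≤ ENNReal.ofReal C)
    (φlim : EuclideanSpace ℝ (Fin 3) × EuclideanSpace ℝ (Fin 3) → ℝ)
    (hφlim : MemLp φlim ⊤ (volume.restrict (Ω ×ˢ Ω)))
    (hφ_weakstar : ∀ h : EuclideanSpace ℝ (Fin 3) × EuclideanSpace ℝ (Fin 3) → ℝ,
      Integrable h (volume.restrict (Ω ×ˢ Ω)) →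
      Tendsto (fun m => ∫ p in Ω ×ˢ Ω, φ m p * h p) atTop
        (𝓝 (∫ p in Ω ×ˢ Ω, φlim p * h p))) :
    ∀ h : EuclideanSpace ℝ (Fin 3) × EuclideanSpace ℝ (Fin 3) → ℝ,
      Integrable h (volume.restrict (Ω ×ˢ Ω)) →
      Tendsto (fun m => ∫ p in Ω ×ˢ Ω, G m p * h p) atTop
        (𝓝 (∫ p in Ω ×ˢ Ω,
          K (dist p.1 p.2) * φlim p * (p.1 k - p.2 k) * (p.1 l - p.2 l) /
            dist p.1 p.2 ^ 2 * h p)) :=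
  discrete_longrange_kernels_weakStar_limit_general Ω hΩ_open hΩ_bdd K hK_cont hK_bdd β C₁ hC₁ k l ε
    hε_pos hε_lim Np x hx_mem V hV hV_diam A φ hφ G hG hφ_bdd φlim hφ_weakstar
end

section
/- Let U ⊆ ℂ be an open connected set, E a complex Banach space, and (f_n) a sequence of holomorphic functions f_n : U → E such that for every compact K ⊆ U, sup_n sup_{z∈K} ‖f_n(z)‖ < ∞. Suppose that (f_n(z)) converges in E for every z in a subset S ⊆ U that has an accumulation point in U. Then there exists a holomorphic function f : U → E such that f_n → f uniformly on every compact subset of U. -/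
/-!
Send `z` to the sequence `(f n z)ₙ` in `ℓ^∞(ℕ, E)`. Cauchy's estimate makes the `f n` locally
equi-Lipschitz, so this map is continuous; its coordinates are holomorphic, so by Morera's theorem
it is holomorphic. The Cauchy sequences form a closed subspace of `ℓ^∞`, and the map composed with
the quotient by that subspace vanishes on `S`, hence on `U` by the identity theorem: `(f n z)`
converges for every `z ∈ U`. A compact set of Cauchy sequences in `ℓ^∞` is uniformly Cauchy, so
the convergence is uniform on compact sets, and the limit is holomorphic.
-/

open Filter Topology Metric Set
open scoped ENNReal

namespace lp

variable {𝕜 E : Type*} [NormedAddCommGroup E]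

variable (𝕜 E) in
def cauchySubmodule [NormedField 𝕜] [NormedSpace 𝕜 E] : Submodule 𝕜 (lp (fun _ : ℕ => E) ∞) where
  carrier := {x | CauchySeq ⇑x}
  add_mem' hx hy := hx.add hy
  zero_mem' := cauchySeq_const 0
  smul_mem' c _ hx := (uniformContinuous_const_smul c).comp_cauchySeq hx

theorem dist_apply_apply_le (x y : lp (fun _ : ℕ => E) ∞) (m n : ℕ) :
    dist (x m) (x n) ≤ dist (y m) (y n) + 2 * dist x y := by
  have h : ∀ k, dist (x k) (y k) ≤ dist x y := fun k => by
    simpa using (lipschitzWith_one_eval (E := fun _ : ℕ => E) ∞ k).dist_le_mul x y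
  calc dist (x m) (x n) ≤ dist (x m) (y m) + dist (y m) (y n) + dist (x n) (y n) := by
        rw [dist_comm (x n)]; exact dist_triangle4 _ _ _ _
    _ ≤ dist x y + dist (y m) (y n) + dist x y := by gcongr <;> apply h
    _ = dist (y m) (y n) + 2 * dist x y := by ring

theorem isClosed_cauchySubmodule [NormedField 𝕜] [NormedSpace 𝕜 E] :
    IsClosed (cauchySubmodule 𝕜 E : Set (lp (fun _ : ℕ => E) ∞)) := by
  refine isClosed_of_closure_subset fun x hx => Metric.cauchySeq_iff.2 fun ε hε => ?_
  obtain ⟨y, hy, hxy⟩ := Metric.mem_closure_iff.1 hx (ε / 3) (by positivity)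
  obtain ⟨N, hN⟩ := Metric.cauchySeq_iff.1 hy (ε / 3) (by positivity)
  refine ⟨N, fun m hm n hn => ?_⟩
  linarith [dist_apply_apply_le x y m n, hN m hm n hn]

theorem uniformCauchySeqOn_of_isCompact {T : Set (lp (fun _ : ℕ => E) ∞)} (hT : IsCompact T)
    (hTc : ∀ x ∈ T, CauchySeq ⇑x) :
    UniformCauchySeqOn (fun n (x : lp (fun _ : ℕ => E) ∞) => x n) atTop T := by
  rw [Metric.uniformCauchySeqOn_iff]
  intro ε hε
  obtain ⟨t, htT, ht, hcover⟩ := hT.finite_cover_balls (e := ε / 3) (by positivity)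
  have hN : ∀ᶠ N in atTop, ∀ y ∈ t, ∀ m ≥ N, ∀ n ≥ N, dist (y m) (y n) < ε / 3 := by
    refine (eventually_all_finite ht).2 fun y hy => ?_
    obtain ⟨N, hN⟩ := Metric.cauchySeq_iff.1 (hTc y (htT hy)) (ε / 3) (by positivity)
    exact eventually_atTop.2 ⟨N, fun N' hN' m hm n hn => hN m (hN'.trans hm) n (hN'.trans hn)⟩
  obtain ⟨N, hN⟩ := hN.exists
  refine ⟨N, fun m hm n hn x hx => ?_⟩
  obtain ⟨y, hy, hxy⟩ := mem_iUnion₂.1 (hcover hx)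
  linarith [dist_apply_apply_le x y m n, hN y hy m hm n hn, mem_ball.1 hxy]

end lp

section toLpInfty

variable {𝕜 E X : Type*} [NormedAddCommGroup E] {f : ℕ → X → E} {x : X}

open Classical in
/-- The junk value `0` is taken where `n ↦ f n x` is unbounded. -/
noncomputable def toLpInfty (f : ℕ → X → E) (x : X) : lp (fun _ : ℕ => E) ∞ :=
  if h : BddAbove (range fun n => ‖f n x‖) then ⟨fun n => f n x, memℓp_infty h⟩ else 0

def LocallyUniformlyBoundedOn [TopologicalSpace X] (f : ℕ → X → E) (U : Set X) : Prop :=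
  ∀ K ⊆ U, IsCompact K → ∃ C : ℝ, ∀ n, ∀ z ∈ K, ‖f n z‖ ≤ C

theorem LocallyUniformlyBoundedOn.bddAbove [TopologicalSpace X] {U : Set X}
    (hb : LocallyUniformlyBoundedOn f U) (hx : x ∈ U) : BddAbove (range fun n => ‖f n x‖) :=
  let ⟨C, hC⟩ := hb {x} (singleton_subset_iff.2 hx) isCompact_singleton
  ⟨C, forall_mem_range.2 fun n => hC n x rfl⟩

theorem coe_toLpInfty (h : BddAbove (range fun n => ‖f n x‖)) :
    ⇑(toLpInfty f x) = fun n => f n x := by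
  simp [toLpInfty, h]

theorem toLpInfty_mem_cauchySubmodule [NormedField 𝕜] [NormedSpace 𝕜 E]
    (h : CauchySeq fun n => f n x) : toLpInfty f x ∈ lp.cauchySubmodule 𝕜 E := by
  unfold toLpInfty
  split_ifs
  exacts [h, zero_mem _]

theorem cauchySeq_of_toLpInfty_mem [NormedField 𝕜] [NormedSpace 𝕜 E]
    (hb : BddAbove (range fun n => ‖f n x‖)) (h : toLpInfty f x ∈ lp.cauchySubmodule 𝕜 E) :
    CauchySeq fun n => f n x := by
  rwa [← coe_toLpInfty hb]

theorem uniformCauchySeqOn_of_continuousOn_toLpInfty [TopologicalSpace X] {K : Set X}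
    (hK : IsCompact K) (hF : ContinuousOn (toLpInfty f) K)
    (hb : ∀ x ∈ K, BddAbove (range fun n => ‖f n x‖)) (hc : ∀ x ∈ K, CauchySeq fun n => f n x) :
    UniformCauchySeqOn f atTop K := by
  have := lp.uniformCauchySeqOn_of_isCompact (hK.image_of_continuousOn hF) <| by
    rintro _ ⟨x, hx, rfl⟩
    rw [coe_toLpInfty (hb x hx)]
    exact hc x hx
  rw [Metric.uniformCauchySeqOn_iff] at this ⊢
  intro ε hε
  obtain ⟨N, hN⟩ := this ε hε
  refine ⟨N, fun m hm n hn x hx => ?_⟩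
  simpa only [coe_toLpInfty (hb x hx)] using hN m hm n hn _ (mem_image_of_mem _ hx)

end toLpInfty

section Complex

variable {E : Type*} [NormedAddCommGroup E] [NormedSpace ℂ E]

theorem DifferentiableOn.norm_sub_le_of_norm_le_on_ball {g : ℂ → E} {c x y : ℂ} {r M : ℝ}
    (hg : DifferentiableOn ℂ g (ball c (2 * r))) (hM : ∀ z ∈ ball c (2 * r), ‖g z‖ ≤ M)
    (hx : x ∈ ball c r) (hy : y ∈ ball c r) :
    ‖g y - g x‖ ≤ 2 * M / r * ‖y - x‖ := by
  have hr : 0 < r := pos_of_mem_ball hx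
  have hsub : ∀ w ∈ ball c r, ball w r ⊆ ball c (2 * r) := fun w hw =>
    ball_subset_ball' (by linarith [mem_ball.1 hw])
  have hmem : ∀ w ∈ ball c r, w ∈ ball c (2 * r) := fun w hw => hsub w hw (mem_ball_self hr)
  refine (convex_ball c r).norm_image_sub_le_of_norm_deriv_le
    (fun w hw => hg.differentiableAt (isOpen_ball.mem_nhds (hmem w hw))) (fun w hw => ?_) hx hy
  have hmaps : MapsTo g (ball w r) (closedBall (g w) (2 * M)) := fun z hz => by
    rw [mem_closedBall, dist_eq_norm]
    linarith [norm_sub_le (g z) (g w), hM z (hsub w hw hz), hM w (hmem w hw)]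
  exact Complex.norm_deriv_le_div_of_mapsTo_ball (hg.mono (hsub w hw)) hmaps hr

theorem ContinuousLinearMap.wedgeIntegral_comp {L F : Type*} [NormedAddCommGroup L]
    [NormedSpace ℂ L] [CompleteSpace L] [NormedAddCommGroup F] [NormedSpace ℂ F] [CompleteSpace F]
    (φ : L →L[ℂ] F) {G : ℂ → L} {z w : ℂ} (hG : ContinuousOn G (Complex.Rectangle z w)) :
    φ (Complex.wedgeIntegral z w G) = Complex.wedgeIntegral z w (φ ∘ G) := by
  have hre : IntervalIntegrable (fun x : ℝ => G (x + z.im * Complex.I)) MeasureTheory.volume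
      z.re w.re :=
    ContinuousOn.intervalIntegrable (hG.comp (by fun_prop) fun x hx => by
      simp [Complex.Rectangle, Complex.mem_reProdIm, hx])
  have him : IntervalIntegrable (fun y : ℝ => G (w.re + y * Complex.I)) MeasureTheory.volume
      z.im w.im :=
    ContinuousOn.intervalIntegrable (hG.comp (by fun_prop) fun y hy => by
      simp [Complex.Rectangle, Complex.mem_reProdIm, hy])
  simp only [Complex.wedgeIntegral, map_add, map_smul, Function.comp_def,
    φ.intervalIntegral_comp_comm hre, φ.intervalIntegral_comp_comm him]

theorem differentiableOn_of_continuousOn_of_forall_comp {ι L F : Type*} [NormedAddCommGroup L]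
    [NormedSpace ℂ L] [CompleteSpace L] [NormedAddCommGroup F] [NormedSpace ℂ F] [CompleteSpace F]
    {G : ℂ → L} {U : Set ℂ} (hU : IsOpen U) (hG : ContinuousOn G U) (φ : ι → L →L[ℂ] F)
    (hφ : ∀ x y, (∀ i, φ i x = φ i y) → x = y) (h : ∀ i, DifferentiableOn ℂ (φ i ∘ G) U) :
    DifferentiableOn ℂ G U := by
  refine (Complex.isConservativeOn_and_continuousOn_iff_isDifferentiableOn hU).1
    ⟨fun z w hzw => hφ _ _ fun i => ?_, hG⟩
  have hwz : Complex.Rectangle w z ⊆ U := by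
    simpa only [Complex.Rectangle, uIcc_comm] using hzw
  rw [map_neg, (φ i).wedgeIntegral_comp (hG.mono hzw), (φ i).wedgeIntegral_comp (hG.mono hwz)]
  exact (h i).isConservativeOn z w hzw

theorem DifferentiableOn.mem_of_frequently_mem {L : Type*} [NormedAddCommGroup L]
    [NormedSpace ℂ L] [CompleteSpace L] {G : ℂ → L} {U : Set ℂ} (hG : DifferentiableOn ℂ G U)
    (hU : IsOpen U) (hU' : IsPreconnected U) {p : Submodule ℂ L} (hp : IsClosed (p : Set L))
    {z₀ : ℂ} (hz₀ : z₀ ∈ U) (hfreq : ∃ᶠ z in 𝓝[≠] z₀, G z ∈ p) {z : ℂ} (hz : z ∈ U) :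
    G z ∈ p := by
  have hQ : AnalyticOnNhd ℂ (p.mkQL ∘ G) U :=
    (p.mkQL.differentiable.comp_differentiableOn hG).analyticOnNhd hU
  exact (Submodule.Quotient.mk_eq_zero p).1 <|
    hQ.eqOn_zero_of_preconnected_of_frequently_eq_zero hU' hz₀
      (hfreq.mono fun z hz => (Submodule.Quotient.mk_eq_zero p).2 hz) hz

variable {f : ℕ → ℂ → E} {U : Set ℂ}

theorem continuousOn_toLpInfty (hU : IsOpen U) (hf : ∀ n, DifferentiableOn ℂ (f n) U)
    (hb : LocallyUniformlyBoundedOn f U) : ContinuousOn (toLpInfty f) U := by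
  intro z hz
  obtain ⟨ε, hε, hεU⟩ := Metric.isOpen_iff.1 hU z hz
  have hclosed : closedBall z (2 * (ε / 3)) ⊆ U := (closedBall_subset_ball (by linarith)).trans hεU
  obtain ⟨M, hM⟩ := hb _ hclosed (isCompact_closedBall z _)
  refine (continuousAt_of_locally_lipschitz (by positivity) (2 * M / (ε / 3))
    fun w (hw : w ∈ ball z (ε / 3)) => ?_).continuousWithinAt
  have hwU : w ∈ U := hclosed (ball_subset_closedBall (ball_subset_ball (by linarith) hw))
  rw [dist_eq_norm, dist_eq_norm]
  refine lp.norm_le_of_forall_le' _ fun n => ?_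
  rw [lp.coeFn_sub, Pi.sub_apply, coe_toLpInfty (hb.bddAbove hwU), coe_toLpInfty (hb.bddAbove hz)]
  exact ((hf n).mono (ball_subset_closedBall.trans hclosed)).norm_sub_le_of_norm_le_on_ball
    (fun y hy => hM n y (ball_subset_closedBall hy)) (mem_ball_self (by positivity)) hw

theorem differentiableOn_toLpInfty [CompleteSpace E] (hU : IsOpen U)
    (hf : ∀ n, DifferentiableOn ℂ (f n) U) (hb : LocallyUniformlyBoundedOn f U) :
    DifferentiableOn ℂ (toLpInfty f) U :=
  differentiableOn_of_continuousOn_of_forall_comp hU (continuousOn_toLpInfty hU hf hb)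
    (lp.evalCLM ℂ (fun _ => E) ∞) (fun _ _ h => lp.ext (funext h)) fun n =>
      (hf n).congr fun _ hz => congrFun (coe_toLpInfty (hb.bddAbove hz)) n

end Complex

theorem vitali_banach_valued_general
    {E : Type*} [NormedAddCommGroup E] [NormedSpace ℂ E] [CompleteSpace E]
    (U : Set ℂ) (hU_open : IsOpen U) (hU_conn : IsConnected U)
    (f : ℕ → ℂ → E)
    (hf_holo : ∀ n, DifferentiableOn ℂ (f n) U)
    (hf_bdd : ∀ K : Set ℂ, K ⊆ U → IsCompact K → ∃ C : ℝ, ∀ n, ∀ z ∈ K, ‖f n z‖ ≤ C)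
    (S : Set ℂ)
    (hS_acc : ∃ z₀ ∈ U, AccPt z₀ (𝓟 S))
    (hconv : ∀ z ∈ S, ∃ l : E, Tendsto (fun n => f n z) atTop (𝓝 l)) :
    ∃ g : ℂ → E, DifferentiableOn ℂ g U ∧
      ∀ K : Set ℂ, K ⊆ U → IsCompact K → TendstoUniformlyOn f g atTop K := by
  obtain ⟨z₀, hz₀U, hz₀⟩ := hS_acc
  have hbdd : LocallyUniformlyBoundedOn f U := hf_bdd
  have hF := differentiableOn_toLpInfty hU_open hf_holo hbdd
  have hFS : ∃ᶠ z in 𝓝[≠] z₀, toLpInfty f z ∈ lp.cauchySubmodule ℂ E :=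
    (accPt_iff_frequently_nhdsNE.1 hz₀).mono fun z hz =>
      let ⟨_, hl⟩ := hconv z hz
      toLpInfty_mem_cauchySubmodule hl.cauchySeq
  have hcauchy : ∀ z ∈ U, CauchySeq fun n => f n z := fun z hz =>
    cauchySeq_of_toLpInfty_mem (hbdd.bddAbove hz) <| hF.mem_of_frequently_mem hU_open
      hU_conn.isPreconnected lp.isClosed_cauchySubmodule hz₀U hFS hz
  have hunif : ∀ K ⊆ U, IsCompact K →
      TendstoUniformlyOn f (fun z => limUnder atTop fun n => f n z) atTop K := by
    intro K hKU hK
    have hK_cauchy : UniformCauchySeqOn f atTop K :=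
      uniformCauchySeqOn_of_continuousOn_toLpInfty hK (hF.continuousOn.mono hKU)
        (fun z hz => hbdd.bddAbove (hKU hz)) fun z hz => hcauchy z (hKU hz)
    exact hK_cauchy.tendstoUniformlyOn_of_tendsto fun z hz => (hcauchy z (hKU hz)).tendsto_limUnder
  exact ⟨_, ((tendstoLocallyUniformlyOn_iff_forall_isCompact hU_open).2 hunif).differentiableOn
    (Eventually.of_forall hf_holo) hU_open, hunif⟩

/-- **Vitali's theorem for Banach-valued holomorphic functions.**
If `(f_n)` are holomorphic on an open connected `U ⊆ ℂ` with values in a complex Banach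
space, locally uniformly bounded on `U`, and converge pointwise on a set `S ⊆ U` having an
accumulation point in `U`, then there is a holomorphic `f : U → E` with `f_n → f` uniformly
on every compact subset of `U`. -/
theorem vitali_banach_valued
    {E : Type*} [NormedAddCommGroup E] [NormedSpace ℂ E] [CompleteSpace E]
    (U : Set ℂ) (hU_open : IsOpen U) (hU_conn : IsConnected U)
    (f : ℕ → ℂ → E)
    (hf_holo : ∀ n, DifferentiableOn ℂ (f n) U)
    (hf_bdd : ∀ K : Set ℂ, K ⊆ U → IsCompact K → ∃ C : ℝ, ∀ n, ∀ z ∈ K, ‖f n z‖ ≤ C)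
    (S : Set ℂ) (hSU : S ⊆ U)
    (hS_acc : ∃ z₀ ∈ U, AccPt z₀ (𝓟 S))
    (hconv : ∀ z ∈ S, ∃ l : E, Tendsto (fun n => f n z) atTop (𝓝 l)) :
    ∃ g : ℂ → E, DifferentiableOn ℂ g U ∧
      ∀ K : Set ℂ, K ⊆ U → IsCompact K → TendstoUniformlyOn f g atTop K :=
  vitali_banach_valued_general U hU_open hU_conn f hf_holo hf_bdd S hS_acc hconv
end
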